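/- arXiv:2407.21605 — 5 statements merged into one kernel-verified Lean document; each statement's English description precedes it below -/
import Mathlib

section
/- Let H be a separable complex Hilbert space with orthogonal decomposition H = H₊ ⊕ H₋ given by orthogonal projections P₊ and P₋ = 1 - P₊. If μ is a bounded operator on H such that P₊μP₊ and P₋μP₋ are trace class, and ν is any bounded operator on H such that the off-diagonal blocks P₊νP₋ and P₋νP₊ are Hilbert–Schmidt (and similarly P₊μP₋, P₋μP₊ are Hilbert–Schmidt), then the restricted trace Tr_res(A) := Tr(P₊AP₊) + Tr(P₋AP₋) satisfies Tr_res(μν) = Tr_res(νμ). -/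
open scoped InnerProductSpace

noncomputable section

/-- A bounded operator between Hilbert spaces is Hilbert–Schmidt if the sum of squared
norms of the images of some Hilbert basis converges. -/
def IsHilbertSchmidt {E F : Type*} [NormedAddCommGroup E] [InnerProductSpace ℂ E]
    [NormedAddCommGroup F] [InnerProductSpace ℂ F] (A : E →L[ℂ] F) : Prop :=
  ∃ (ι : Type) (b : HilbertBasis ι ℂ E), Summable fun i => ‖A (b i)‖ ^ 2

/-- A bounded operator is trace class if it is a product of two Hilbert–Schmidt operators. -/
def IsTraceClass {E : Type*} [NormedAddCommGroup E] [InnerProductSpace ℂ E]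
    (A : E →L[ℂ] E) : Prop :=
  ∃ B C : E →L[ℂ] E, IsHilbertSchmidt B ∧ IsHilbertSchmidt C ∧ A = B ∘L C

/-- The trace of an operator computed with respect to a Hilbert basis. -/
def traceB {H : Type*} [NormedAddCommGroup H] [InnerProductSpace ℂ H]
    {ι : Type*} (b : HilbertBasis ι ℂ H) (A : H →L[ℂ] H) : ℂ :=
  ∑' i, ⟪b i, A (b i)⟫_ℂ

/-- The restricted trace `Tr_res(A) = Tr(P₊ A P₊) + Tr(P₋ A P₋)` with `P₋ = 1 - P₊`,
computed with respect to a Hilbert basis. -/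
def trRes {H : Type*} [NormedAddCommGroup H] [InnerProductSpace ℂ H]
    {ι : Type*} (b : HilbertBasis ι ℂ H) (P : H →L[ℂ] H) (A : H →L[ℂ] H) : ℂ :=
  traceB b (P * A * P) + traceB b ((1 - P) * A * (1 - P))

/-!
Each block `P(μν)P = μ₊₊ν₊₊ + μ₊₋ν₋₊` and `P₋(μν)P₋ = μ₋₋ν₋₋ + μ₋₊ν₊₋` is a sum of two products,
and the same four pairs of factors, in the opposite order, make up the blocks of `νμ`. For each
pair the diagonal series of both products converge to the same sum. For two Hilbert–Schmidt
operators `A`, `B` both series are rearrangements of the absolutely convergent double series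
`∑ᵢⱼ Aᵢⱼ Bⱼᵢ`. A trace-class `T = BC` against a bounded `X` reduces to that case twice, via
`B(CX) ~ (CX)B = C(XB) ~ (XB)C`. Hilbert–Schmidt summability does not depend on the basis,
since Parseval and Tonelli give `∑ᵢ ‖A eᵢ‖² = ∑ₖ ‖A* fₖ‖²` for any two Hilbert bases.
-/

open scoped ENNReal

section HilbertBasis

variable {E : Type*} [NormedAddCommGroup E] [InnerProductSpace ℂ E] {ι : Type*}

theorem HilbertBasis.hasSum_norm_inner_sq (b : HilbertBasis ι ℂ E) (x : E) :
    HasSum (fun i => ‖⟪b i, x⟫_ℂ‖ ^ 2) (‖x‖ ^ 2) := by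
  have h := (b.hasSum_inner_mul_inner x x).mapL Complex.reCLM
  convert h using 1
  · ext i
    rw [Complex.reCLM_apply, ← inner_conj_symm x (b i), RCLike.conj_mul]
    norm_cast
  · rw [Complex.reCLM_apply, inner_self_eq_norm_sq_to_K]
    norm_cast

theorem HilbertBasis.tsum_enorm_inner_sq (b : HilbertBasis ι ℂ E) (x : E) :
    ∑' i, ‖⟪b i, x⟫_ℂ‖ₑ ^ 2 = ‖x‖ₑ ^ 2 := by
  have h := b.hasSum_norm_inner_sq x
  rw [← ofReal_norm, ← ENNReal.ofReal_pow (norm_nonneg _), ← h.tsum_eq,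
    ENNReal.ofReal_tsum_of_nonneg (fun i => sq_nonneg _) h.summable]
  simp_rw [ENNReal.ofReal_pow (norm_nonneg _), ofReal_norm]

end HilbertBasis

theorem summable_norm_sq_iff_tsum_enorm_sq_ne_top {α E : Type*} [SeminormedAddCommGroup E]
    {g : α → E} : Summable (fun a => ‖g a‖ ^ 2) ↔ ∑' a, ‖g a‖ₑ ^ 2 ≠ ∞ := by
  have h : ∀ a, ‖g a‖ₑ ^ 2 = ‖‖g a‖ ^ 2‖ₑ := fun a => by
    rw [Real.enorm_of_nonneg (by positivity), ENNReal.ofReal_pow (norm_nonneg _), ofReal_norm]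
  simp_rw [h, tsum_enorm_ne_top_iff_summable_norm, Real.norm_of_nonneg (sq_nonneg _)]

section HilbertSchmidt

variable {E F G : Type*} [NormedAddCommGroup E] [InnerProductSpace ℂ E]
  [NormedAddCommGroup F] [InnerProductSpace ℂ F] [NormedAddCommGroup G] [InnerProductSpace ℂ G]
  {ι κ : Type*}

open ContinuousLinearMap

theorem Summable.norm_comp_apply_sq {b : HilbertBasis ι ℂ E} {A : E →L[ℂ] F}
    (hA : Summable fun i => ‖A (b i)‖ ^ 2) (B : F →L[ℂ] G) :
    Summable fun i => ‖(B ∘L A) (b i)‖ ^ 2 := by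
  refine .of_nonneg_of_le (fun i => sq_nonneg _) (fun i => ?_) (hA.mul_left (‖B‖ ^ 2))
  rw [← mul_pow]
  gcongr
  exact B.le_opNorm _

variable [CompleteSpace E] [CompleteSpace F] [CompleteSpace G]

theorem tsum_enorm_apply_sq_eq_adjoint (b : HilbertBasis ι ℂ E) (c : HilbertBasis κ ℂ F)
    (A : E →L[ℂ] F) : ∑' i, ‖A (b i)‖ₑ ^ 2 = ∑' k, ‖adjoint A (c k)‖ₑ ^ 2 :=
  calc ∑' i, ‖A (b i)‖ₑ ^ 2
      = ∑' i, ∑' k, ‖⟪c k, A (b i)⟫_ℂ‖ₑ ^ 2 := by simp_rw [c.tsum_enorm_inner_sq]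
    _ = ∑' k, ∑' i, ‖⟪b i, adjoint A (c k)⟫_ℂ‖ₑ ^ 2 := by
        rw [ENNReal.tsum_comm]
        simp_rw [adjoint_inner_right, ← inner_conj_symm (A _), RCLike.enorm_conj]
    _ = ∑' k, ‖adjoint A (c k)‖ₑ ^ 2 := by simp_rw [b.tsum_enorm_inner_sq]

namespace IsHilbertSchmidt

variable {A : E →L[ℂ] F}

theorem summable_norm_adjoint_apply_sq (hA : IsHilbertSchmidt A) (c : HilbertBasis κ ℂ F) :
    Summable fun k => ‖adjoint A (c k)‖ ^ 2 := by
  obtain ⟨ι, b, hb⟩ := hA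
  rw [summable_norm_sq_iff_tsum_enorm_sq_ne_top, ← tsum_enorm_apply_sq_eq_adjoint b c,
    ← summable_norm_sq_iff_tsum_enorm_sq_ne_top]
  exact hb

theorem summable_norm_apply_sq (hA : IsHilbertSchmidt A) (b : HilbertBasis ι ℂ E) :
    Summable fun i => ‖A (b i)‖ ^ 2 := by
  obtain ⟨w, c, -⟩ := exists_hilbertBasis ℂ F
  rw [summable_norm_sq_iff_tsum_enorm_sq_ne_top, tsum_enorm_apply_sq_eq_adjoint b c,
    ← summable_norm_sq_iff_tsum_enorm_sq_ne_top]
  exact hA.summable_norm_adjoint_apply_sq c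

theorem summable_norm_apply_comp_sq {A : F →L[ℂ] G} (hA : IsHilbertSchmidt A) (B : E →L[ℂ] F)
    (b : HilbertBasis ι ℂ E) : Summable fun i => ‖(A ∘L B) (b i)‖ ^ 2 := by
  obtain ⟨w, c, -⟩ := exists_hilbertBasis ℂ G
  rw [summable_norm_sq_iff_tsum_enorm_sq_ne_top, tsum_enorm_apply_sq_eq_adjoint b c, adjoint_comp,
    ← summable_norm_sq_iff_tsum_enorm_sq_ne_top]
  exact (hA.summable_norm_adjoint_apply_sq c).norm_comp_apply_sq _

end IsHilbertSchmidt

end HilbertSchmidt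

section Trace

open ContinuousLinearMap

variable {H : Type*} [NormedAddCommGroup H] [InnerProductSpace ℂ H] {ι : Type*}
  {b : HilbertBasis ι ℂ H}

theorem summable_norm_inner_apply_sq {A : H →L[ℂ] H} (hA : Summable fun i => ‖A (b i)‖ ^ 2) :
    Summable fun p : ι × ι => ‖⟪b p.1, A (b p.2)⟫_ℂ‖ ^ 2 := by
  rw [summable_norm_sq_iff_tsum_enorm_sq_ne_top] at hA ⊢
  rw [ENNReal.tsum_prod', ENNReal.tsum_comm]
  simpa only [b.tsum_enorm_inner_sq] using hA

theorem traceB_add_of_hasSum {X Y : H →L[ℂ] H} {s t : ℂ}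
    (hX : HasSum (fun i => ⟪b i, X (b i)⟫_ℂ) s) (hY : HasSum (fun i => ⟪b i, Y (b i)⟫_ℂ) t) :
    traceB b (X + Y) = s + t := by
  simpa only [traceB, add_apply, inner_add_right] using (hX.add hY).tsum_eq

variable [CompleteSpace H]

theorem hasSum_inner_mul_apply {A B : H →L[ℂ] H} (hA : Summable fun i => ‖A (b i)‖ ^ 2)
    (hB : Summable fun i => ‖B (b i)‖ ^ 2) :
    HasSum (fun i => ⟪b i, (A * B) (b i)⟫_ℂ)
      (∑' p : ι × ι, ⟪b p.1, A (b p.2)⟫_ℂ * ⟪b p.2, B (b p.1)⟫_ℂ) := by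
  have hB_swap := (Equiv.prodComm ι ι).summable_iff.mpr (summable_norm_inner_apply_sq hB)
  have hsum : Summable fun p : ι × ι => ⟪b p.1, A (b p.2)⟫_ℂ * ⟪b p.2, B (b p.1)⟫_ℂ := by
    refine .of_norm_bounded (((summable_norm_inner_apply_sq hA).add hB_swap).div_const 2)
      fun p => ?_
    simp only [Function.comp_apply, Equiv.prodComm_apply, Prod.fst_swap, Prod.snd_swap,
      norm_mul]
    nlinarith [two_mul_le_add_sq ‖⟪b p.1, A (b p.2)⟫_ℂ‖ ‖⟪b p.2, B (b p.1)⟫_ℂ‖]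
  refine hsum.hasSum.prod_fiberwise fun i => ?_
  have h := b.hasSum_inner_mul_inner (adjoint A (b i)) (B (b i))
  simp only [adjoint_inner_left] at h
  exact h

theorem exists_hasSum_inner_mul_apply_comm {A B : H →L[ℂ] H}
    (hA : Summable fun i => ‖A (b i)‖ ^ 2) (hB : Summable fun i => ‖B (b i)‖ ^ 2) :
    ∃ t, HasSum (fun i => ⟪b i, (A * B) (b i)⟫_ℂ) t ∧
      HasSum (fun i => ⟪b i, (B * A) (b i)⟫_ℂ) t := by
  refine ⟨_, hasSum_inner_mul_apply hA hB, ?_⟩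
  convert hasSum_inner_mul_apply hB hA using 1
  rw [← (Equiv.prodComm ι ι).tsum_eq]
  simp only [Equiv.prodComm_apply, Prod.fst_swap, Prod.snd_swap, mul_comm]

theorem IsTraceClass.exists_hasSum_inner_mul_apply_comm {T : H →L[ℂ] H} (hT : IsTraceClass T)
    (X : H →L[ℂ] H) (b : HilbertBasis ι ℂ H) :
    ∃ t, HasSum (fun i => ⟪b i, (T * X) (b i)⟫_ℂ) t ∧
      HasSum (fun i => ⟪b i, (X * T) (b i)⟫_ℂ) t := by
  obtain ⟨B, C, hB, hC, rfl⟩ := hT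
  obtain ⟨s, hBCX, hCXB⟩ := _root_.exists_hasSum_inner_mul_apply_comm
    (hB.summable_norm_apply_sq b) (hC.summable_norm_apply_comp_sq X b)
  obtain ⟨t, hCXB', hXBC⟩ := _root_.exists_hasSum_inner_mul_apply_comm
    (hC.summable_norm_apply_sq b) ((hB.summable_norm_apply_sq b).norm_comp_apply_sq X)
  refine ⟨s, hBCX, ?_⟩
  rwa [hCXB.unique hCXB']

end Trace

theorem mul_mul_mul_eq_add_of_isIdempotentElem {R : Type*} [Ring R] {p q : R}
    (hp : IsIdempotentElem p) (hq : IsIdempotentElem q) (hpq : p + q = 1) (a c : R) :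
    p * (a * c) * p = p * a * p * (p * c * p) + p * a * q * (q * c * p) :=
  calc p * (a * c) * p = p * a * (p + q) * c * p := by rw [hpq]; noncomm_ring
    _ = p * a * (p * p) * c * p + p * a * (q * q) * c * p := by rw [hp.eq, hq.eq]; noncomm_ring
    _ = p * a * p * (p * c * p) + p * a * q * (q * c * p) := by noncomm_ring

theorem trRes_mul_comm_general {H : Type*} [NormedAddCommGroup H] [InnerProductSpace ℂ H]
    [CompleteSpace H]
    (P μ ν : H →L[ℂ] H) (hP_proj : P * P = P)
    (hμpp : IsTraceClass (P * μ * P))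
    (hμmm : IsTraceClass ((1 - P) * μ * (1 - P)))
    (hμpm : IsHilbertSchmidt (P * μ * (1 - P)))
    (hμmp : IsHilbertSchmidt ((1 - P) * μ * P))
    (hνpm : IsHilbertSchmidt (P * ν * (1 - P)))
    (hνmp : IsHilbertSchmidt ((1 - P) * ν * P)) :
    ∀ {ι : Type*} (b : HilbertBasis ι ℂ H),
      trRes b P (μ * ν) = trRes b P (ν * μ) := by
  intro ι b
  have hP : IsIdempotentElem P := hP_proj
  have blocks := mul_mul_mul_eq_add_of_isIdempotentElem hP hP.one_sub (add_sub_cancel P 1)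
  have blocks' := mul_mul_mul_eq_add_of_isIdempotentElem hP.one_sub hP (sub_add_cancel 1 P)
  obtain ⟨t₁, hμν₁, hνμ₁⟩ := hμpp.exists_hasSum_inner_mul_apply_comm (P * ν * P) b
  obtain ⟨t₂, hμν₂, hνμ₂⟩ := exists_hasSum_inner_mul_apply_comm
    (hμpm.summable_norm_apply_sq b) (hνmp.summable_norm_apply_sq b)
  obtain ⟨t₃, hμν₃, hνμ₃⟩ := hμmm.exists_hasSum_inner_mul_apply_comm ((1 - P) * ν * (1 - P)) b
  obtain ⟨t₄, hμν₄, hνμ₄⟩ := exists_hasSum_inner_mul_apply_comm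
    (hμmp.summable_norm_apply_sq b) (hνpm.summable_norm_apply_sq b)
  calc trRes b P (μ * ν) = (t₁ + t₂) + (t₃ + t₄) := by
        rw [trRes, blocks, blocks', traceB_add_of_hasSum hμν₁ hμν₂,
          traceB_add_of_hasSum hμν₃ hμν₄]
    _ = (t₁ + t₄) + (t₃ + t₂) := by ring
    _ = trRes b P (ν * μ) := by
        rw [trRes, blocks, blocks', traceB_add_of_hasSum hνμ₁ hνμ₄,
          traceB_add_of_hasSum hνμ₃ hνμ₂]

/-- Cyclicity of the restricted trace: if `μ` has trace-class diagonal blocks and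
Hilbert–Schmidt off-diagonal blocks, and `ν` is bounded with Hilbert–Schmidt
off-diagonal blocks, then `Tr_res(μν) = Tr_res(νμ)`. -/
theorem trRes_mul_comm {H : Type*} [NormedAddCommGroup H] [InnerProductSpace ℂ H]
    [CompleteSpace H] [TopologicalSpace.SeparableSpace H]
    (P μ ν : H →L[ℂ] H) (hP_proj : P * P = P) (hP_sa : IsSelfAdjoint P)
    (hμpp : IsTraceClass (P * μ * P))
    (hμmm : IsTraceClass ((1 - P) * μ * (1 - P)))
    (hμpm : IsHilbertSchmidt (P * μ * (1 - P)))
    (hμmp : IsHilbertSchmidt ((1 - P) * μ * P))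
    (hνpm : IsHilbertSchmidt (P * ν * (1 - P)))
    (hνmp : IsHilbertSchmidt ((1 - P) * ν * P)) :
    ∀ {ι : Type*} (b : HilbertBasis ι ℂ H),
      trRes b P (μ * ν) = trRes b P (ν * μ) :=
  trRes_mul_comm_general P μ ν hP_proj hμpp hμmm hμpm hμmp hνpm hνmp
end
end

section
/- Let μ be a skew-adjoint bounded operator on H = H₊ ⊕ H₋ with μ₊₊ = P₊μP₊ = 0. Then for every n ≥ 0, the ++ block of the time derivative of μ₊₋μ₋₊ along the Lax flow dμ/dt = −i^{n+1}[P₊, μ^{n+1}] equals i^{n+1}[(μ^{n+1})₊₊, μ₊₊]; in particular, if μ₊₊ = 0 is preserved, then μ₋₊* μ₋₊ is constant, so the modulus |μ₋₊| = √(μ₋₊*μ₋₊) is a constant of motion. -/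
/-!
Write `Q = 1 - P`, `A = μ^{n+1}` and `c = i^{n+1}`. The off-diagonal corners of `μ' = -c [P, A]`
are `-c P A Q` and `c Q A P`, so by the product rule `(P μ Q μ P)' = -c (P A Q μ P - P μ Q A P)`.
Expanding `Q = 1 - P`, the terms `P A μ P` and `P μ A P` cancel because `A` commutes with `μ`,
leaving `c [A₊₊, μ₊₊]`, which vanishes when `μ₊₊ = 0`. Skew-adjointness gives
`μ₋₊* μ₋₊ = -μ₊₋ μ₋₊`, so this operator, and hence its square root, is constant.
-/

theorem IsIdempotentElem.corner_commutator_identity {R : Type*} [Ring R] {P : R}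
    (hP : IsIdempotentElem P) {m A : R} (hA : Commute A m) :
    P * (P * A - A * P) * (1 - P) * ((1 - P) * m * P)
        + P * m * (1 - P) * ((1 - P) * (P * A - A * P) * P)
      = -(P * A * P * (P * m * P) - P * m * P * (P * A * P)) := by
  have hP' : ∀ x : R, P * (P * x) = P * x := fun x => by rw [← mul_assoc, hP.eq]
  have hA' : ∀ x : R, A * (m * x) = m * (A * x) := fun x => by rw [← mul_assoc, hA.eq, mul_assoc]
  simp only [mul_sub, sub_mul, mul_one, one_mul, mul_assoc, hP', hP.eq, hA']
  abel

theorem IsSelfAdjoint.star_corner_mul_corner {R : Type*} [Ring R] [StarRing R] {P : R}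
    (hP : IsSelfAdjoint P) {m : R} (hm : star m = -m) :
    star ((1 - P) * m * P) * ((1 - P) * m * P) = -(P * m * (1 - P) * ((1 - P) * m * P)) := by
  rw [star_mul, star_mul, hm, hP.star_eq, star_sub, star_one, hP.star_eq]
  noncomm_ring

theorem IsIdempotentElem.hasDerivAt_corner_mul_corner {R : Type*} [NormedRing R]
    [NormedAlgebra ℂ R] {P : R} (hP : IsIdempotentElem P)
    {μ : ℝ → R} {t : ℝ} {c : ℂ} {k : ℕ}
    (hμ : HasDerivAt μ (-c • (P * μ t ^ k - μ t ^ k * P)) t) :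
    HasDerivAt (fun s => P * μ s * (1 - P) * ((1 - P) * μ s * P))
      (c • (P * μ t ^ k * P * (P * μ t * P) - P * μ t * P * (P * μ t ^ k * P))) t := by
  have key := hP.corner_commutator_identity ((Commute.refl (μ t)).pow_left k)
  refine (((hμ.const_mul P).mul_const (1 - P)).mul
    ((hμ.const_mul (1 - P)).mul_const P)).congr_deriv ?_
  rw [mul_smul_comm, smul_mul_assoc, smul_mul_assoc, mul_smul_comm, smul_mul_assoc,
    mul_smul_comm, ← smul_add, key, smul_neg, neg_smul, neg_neg]

/-- For a differentiable curve of skew-adjoint operators `μ(t)` with `μ₊₊ = 0` satisfying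
the Lax flow `dμ/dt = −i^{n+1}[P₊, μ^{n+1}]`, the derivative of `μ₊₋μ₋₊` equals
`i^{n+1}[(μ^{n+1})₊₊, μ₊₊]`; in particular `μ₋₊*μ₋₊` is constant, so the modulus
`|μ₋₊| = √(μ₋₊*μ₋₊)` is a constant of motion. -/
theorem modulus_const_along_lax_flow {H : Type*} [NormedAddCommGroup H]
    [InnerProductSpace ℂ H] [CompleteSpace H]
    (P : H →L[ℂ] H) (hP_proj : P * P = P) (hP_sa : IsSelfAdjoint P)
    (n : ℕ) (μ : ℝ → H →L[ℂ] H)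
    (hskew : ∀ t : ℝ, star (μ t) = -(μ t))
    (hflow : ∀ t : ℝ, HasDerivAt μ
      (-(Complex.I ^ (n + 1)) • (P * (μ t) ^ (n + 1) - (μ t) ^ (n + 1) * P)) t)
    (h0 : ∀ t : ℝ, P * μ t * P = 0) :
    (∀ t : ℝ, HasDerivAt (fun s => (P * μ s * (1 - P)) * ((1 - P) * μ s * P))
        ((Complex.I ^ (n + 1)) •
          ((P * (μ t) ^ (n + 1) * P) * (P * μ t * P)
            - (P * μ t * P) * (P * (μ t) ^ (n + 1) * P))) t) ∧
    (∀ t : ℝ, star ((1 - P) * μ t * P) * ((1 - P) * μ t * P)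
        = star ((1 - P) * μ 0 * P) * ((1 - P) * μ 0 * P)) ∧
    (∀ t : ℝ, CFC.sqrt (star ((1 - P) * μ t * P) * ((1 - P) * μ t * P))
        = CFC.sqrt (star ((1 - P) * μ 0 * P) * ((1 - P) * μ 0 * P))) := by
  have hderiv := fun t => IsIdempotentElem.hasDerivAt_corner_mul_corner hP_proj (hflow t)
  have hconst : ∀ t, P * μ t * (1 - P) * ((1 - P) * μ t * P)
      = P * μ 0 * (1 - P) * ((1 - P) * μ 0 * P) := by
    have hzero : ∀ t, HasDerivAt (fun s => P * μ s * (1 - P) * ((1 - P) * μ s * P)) 0 t := by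
      intro t
      simpa only [h0 t, mul_zero, zero_mul, sub_zero, smul_zero] using hderiv t
    exact fun t => is_const_of_deriv_eq_zero (fun s => (hzero s).differentiableAt)
      (fun s => (hzero s).deriv) t 0
  have hmodulus : ∀ t, star ((1 - P) * μ t * P) * ((1 - P) * μ t * P)
      = star ((1 - P) * μ 0 * P) * ((1 - P) * μ 0 * P) := fun t => by
    rw [hP_sa.star_corner_mul_corner (hskew t), hP_sa.star_corner_mul_corner (hskew 0), hconst t]
  exact ⟨hderiv, hmodulus, fun t => by rw [hmodulus t]⟩
end

section
/- Let μ be a bounded operator with P₊μP₊ = 0, and let H^n_k(μ) be the sum over tuples (i₀,…,iₙ) ∈ {0,1}^{n+1} with Σiⱼ = k of P₊^{i₀}μP₊^{i₁}⋯μP₊^{iₙ}. If k > n/2 + 1, then P₋ μ H^{n−1}_{k−1}(μ) P₋ = 0. -/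
/-! A word `P^{i₀} μ P^{i₁} ⋯ μ P^{i_{n-1}}` with more than `n/2` factors `P` either ends in `P`,
and is then killed on the right by `P (1 - P) = 0`, or has two factors `P` separated by a
single `μ`, and then contains `P μ P = 0`: among the `n - 1` positions before the last one,
at most `n/2` can carry a `P` with no two of them adjacent. -/

noncomputable section

/-- `HpolyOp P μ n k` is the homogeneous polynomial `H^n_k(μ)`: the sum over all tuples
`(i₀,…,iₙ) ∈ {0,1}^{n+1}` with `i₀+⋯+iₙ = k` of `P^{i₀} μ P^{i₁} μ ⋯ μ P^{iₙ}`.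
By convention it vanishes for `k < 0` or `k > n+1`. -/
def HpolyOp {H : Type*} [NormedAddCommGroup H] [InnerProductSpace ℂ H]
    (P μ : H →L[ℂ] H) (n : ℕ) (k : ℤ) : H →L[ℂ] H :=
  ∑ f ∈ Finset.univ.filter
      (fun f : Fin (n + 1) → Bool =>
        ((Finset.univ.filter fun j => f j = true).card : ℤ) = k),
    (List.ofFn fun j : Fin (n + 1) =>
      (if f j then P else 1) * (if (j : ℕ) < n then μ else 1)).prod

open Finset

-- Each pair `{2i, 2i+1}` contains at most one element of `s`.
theorem Finset.card_le_of_forall_add_one_notMem {s : Finset ℕ} {m : ℕ} (hs : ∀ i ∈ s, i < m)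
    (hsep : ∀ i ∈ s, i + 1 ∉ s) : #s ≤ (m + 1) / 2 := by
  calc #s ≤ #(range ((m + 1) / 2)) := by
        refine card_le_card_of_injOn (· / 2) (fun i hi => ?_) (fun i hi j hj hij => ?_)
        · have := hs i hi
          simp only [coe_range, Set.mem_Iio]
          omega
        · by_contra hne
          rcases Nat.lt_or_gt_of_ne hne with h | h
          · exact hsep i hi (by simp only at hij; rwa [show i + 1 = j by omega])
          · exact hsep j hj (by simp only at hij; rwa [show j + 1 = i by omega])
    _ = (m + 1) / 2 := card_range _

theorem Fin.exists_last_or_adjacent_of_card_filter_gt {m : ℕ} (f : Fin (m + 1) → Bool)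
    (hcard : (m + 1) / 2 < #(univ.filter fun j => f j = true)) :
    f (Fin.last m) = true ∨ ∃ i j : Fin (m + 1), f i = true ∧ f j = true ∧ (i : ℕ) + 1 = j := by
  by_contra! h
  obtain ⟨hlast, hsep⟩ := h
  set s := (univ.filter fun j => f j = true).map Fin.valEmbedding
  have hmem : ∀ i, i ∈ s ↔ ∃ hi : i < m + 1, f ⟨i, hi⟩ = true := by
    intro i
    simp only [s, mem_map, mem_filter, mem_univ, true_and, Fin.valEmbedding_apply]
    exact ⟨fun ⟨j, hj, hji⟩ => hji ▸ ⟨j.isLt, hj⟩, fun ⟨hi, hfi⟩ => ⟨_, hfi, rfl⟩⟩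
  have hle : #s ≤ (m + 1) / 2 := by
    refine Finset.card_le_of_forall_add_one_notMem (fun i hi => ?_) (fun i hi hi1 => ?_)
    · obtain ⟨hi, hfi⟩ := (hmem i).1 hi
      refine lt_of_le_of_ne (Nat.lt_succ_iff.1 hi) fun him => ?_
      subst him
      exact absurd hfi (by simpa [Fin.last] using hlast)
    · obtain ⟨hi, hfi⟩ := (hmem i).1 hi
      obtain ⟨hi1, hfi1⟩ := (hmem (i + 1)).1 hi1
      exact hsep _ _ hfi hfi1 rfl
  rw [card_map] at hle
  omega

section Word

variable {R : Type*}

def hpolyWord [Monoid R] (p a : R) (n : ℕ) (f : Fin (n + 1) → Bool) : R :=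
  (List.ofFn fun j : Fin (n + 1) => (if f j then p else 1) * (if (j : ℕ) < n then a else 1)).prod

theorem hpolyWord_eq_mul_of_last [Monoid R] (p a : R) {n : ℕ} {f : Fin (n + 1) → Bool}
    (hf : f (Fin.last n) = true) : ∃ b, hpolyWord p a n f = b * p :=
  ⟨_, by rw [hpolyWord, List.ofFn_succ', List.prod_concat]; simp [hf]; rfl⟩

theorem List.prod_eq_zero_of_getElem_mul_getElem_succ [MonoidWithZero R] :
    ∀ (L : List R) (i : ℕ) (hi : i + 1 < L.length), L[i] * L[i + 1] = 0 → L.prod = 0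
  | a :: b :: L, 0, _, h => by
      simp only [List.getElem_cons_zero, List.getElem_cons_succ] at h
      rw [List.prod_cons, List.prod_cons, ← mul_assoc, h, zero_mul]
  | a :: L, i + 1, hi, h => by
      rw [List.prod_cons, L.prod_eq_zero_of_getElem_mul_getElem_succ i (by simpa using hi)
        (by simpa using h), mul_zero]

theorem hpolyWord_eq_zero_of_adjacent [MonoidWithZero R] {p a : R} (h0 : p * a * p = 0) {n : ℕ}
    {f : Fin (n + 1) → Bool} {i j : Fin (n + 1)} (hi : f i = true) (hj : f j = true)
    (hij : (i : ℕ) + 1 = j) : hpolyWord p a n f = 0 := by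
  have hin : (i : ℕ) < n := by omega
  refine List.prod_eq_zero_of_getElem_mul_getElem_succ _ i (by rw [List.length_ofFn]; omega) ?_
  simp only [List.getElem_ofFn, hij, Fin.eta, hi, hj, hin, if_true]
  rw [← mul_assoc, h0, zero_mul]

end Word

theorem HpolyOp_eq_sum_hpolyWord {H : Type*} [NormedAddCommGroup H] [InnerProductSpace ℂ H]
    (P μ : H →L[ℂ] H) (n : ℕ) (k : ℤ) :
    HpolyOp P μ n k = ∑ f ∈ univ.filter
      (fun f : Fin (n + 1) → Bool => ((univ.filter fun j => f j = true).card : ℤ) = k),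
      hpolyWord P μ n f :=
  rfl

theorem Hpoly_block_vanishes_general {H : Type*} [NormedAddCommGroup H] [InnerProductSpace ℂ H]
    (P μ : H →L[ℂ] H) (hP_proj : P * P = P)
    (h0 : P * μ * P = 0) (n k : ℕ) (hk : 2 * k > n + 2) :
    (1 - P) * (μ * HpolyOp P μ (n - 1) ((k : ℤ) - 1)) * (1 - P) = 0 := by
  have hP_compl : P * (1 - P) = 0 := by rw [mul_sub, mul_one, hP_proj, sub_self]
  rw [HpolyOp_eq_sum_hpolyWord, mul_sum, mul_sum, sum_mul]
  refine sum_eq_zero fun f hf => ?_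
  have hcard : (n - 1 + 1) / 2 < #(univ.filter fun j => f j = true) := by
    have := (mem_filter.1 hf).2
    omega
  rcases Fin.exists_last_or_adjacent_of_card_filter_gt f hcard with hlast | ⟨i, j, hi, hj, hij⟩
  · obtain ⟨b, hb⟩ := hpolyWord_eq_mul_of_last P μ hlast
    rw [hb, mul_assoc, mul_assoc, mul_assoc, hP_compl, mul_zero, mul_zero, mul_zero]
  · rw [hpolyWord_eq_zero_of_adjacent h0 hi hj hij, mul_zero, mul_zero, zero_mul]

/-- If `P₊μP₊ = 0` and `k > n/2 + 1`, then `P₋ μ H^{n−1}_{k−1}(μ) P₋ = 0`. -/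
theorem Hpoly_block_vanishes {H : Type*} [NormedAddCommGroup H] [InnerProductSpace ℂ H]
    (P μ : H →L[ℂ] H) (hP_proj : P * P = P)
    (h0 : P * μ * P = 0) (n k : ℕ) (hn : 1 ≤ n) (hk : 2 * k > n + 2) :
    (1 - P) * (μ * HpolyOp P μ (n - 1) ((k : ℤ) - 1)) * (1 - P) = 0 :=
  Hpoly_block_vanishes_general P μ hP_proj h0 n k hk
end
end

section
/- Let μ be a bounded operator with P₊μP₊ = 0. Then P₊[μ², H^n_k(μ)]P₊ = 0 for all n, k, where H^n_k(μ) is the sum over tuples (i₀,…,iₙ) ∈ {0,1}^{n+1} with Σiⱼ = k of P₊^{i₀}μP₊^{i₁}⋯μP₊^{iₙ}. -/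
/-!
Expand `H^{n+2}_k(μ)` by the two-step recurrence once from the left and once from the right
and sandwich both expansions between `P`. Every term containing `PμP` drops out and `P² = P`
merges the rest, so `Pμ²(H^n_{k-1} + H^n_k)P = P(H^n_{k-1} + H^n_k)μ²P`: the sandwiched
commutators at `k` and `k - 1` cancel. They vanish for `k < 0`, hence for all `k`.
-/

noncomputable section

open Finset

theorem Fin.card_filter_cons_eq_true {n : ℕ} (a : Bool) (g : Fin n → Bool) :
    #{j | (Fin.cons a g : Fin (n + 1) → Bool) j = true} = a.toNat + #{j | g j = true} := by
  rw [card_filter, card_filter, Fin.sum_univ_succ]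
  cases a <;> simp

section HpolyOp

variable {H : Type*} [NormedAddCommGroup H] [InnerProductSpace ℂ H] (P μ : H →L[ℂ] H)

theorem HpolyOp_of_neg (n : ℕ) {k : ℤ} (hk : k < 0) : HpolyOp P μ n k = 0 := by
  refine sum_eq_zero fun f hf => ?_
  simp only [mem_filter] at hf
  omega

theorem HpolyOp_zero (k : ℤ) :
    HpolyOp P μ 0 k = (if k = 0 then 1 else 0) + (if k = 1 then P else 0) := by
  rw [HpolyOp, sum_filter, ← (Equiv.funUnique (Fin 1) Bool).symm.sum_comp, Fintype.sum_bool]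
  norm_num [Equiv.funUnique, List.ofFn_succ]
  split_ifs <;> first | omega | simp

theorem HpolyOp_succ_left (n : ℕ) (k : ℤ) :
    HpolyOp P μ (n + 1) k = P * μ * HpolyOp P μ n (k - 1) + μ * HpolyOp P μ n k := by
  have hprod (a : Bool) (g : Fin (n + 1) → Bool) :
      (List.ofFn fun j : Fin (n + 2) =>
          (if (Fin.cons a g : Fin (n + 2) → Bool) j then P else 1) *
            (if (j : ℕ) < n + 1 then μ else 1)).prod
        = ((if a then P else 1) * μ) *
          (List.ofFn fun j : Fin (n + 1) =>
            (if g j then P else 1) * (if (j : ℕ) < n then μ else 1)).prod := by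
    simp [List.ofFn_succ]
  conv_lhs => rw [HpolyOp, sum_filter, ← (Fin.consEquiv fun _ => Bool).sum_comp,
    Fintype.sum_prod_type, Fintype.sum_bool]
  simp only [Fin.consEquiv_apply, hprod, Fin.card_filter_cons_eq_true]
  simp only [HpolyOp, sum_filter, mul_sum, mul_ite, mul_zero, if_pos, Bool.false_eq_true,
    if_false, one_mul]
  congr 1 <;> exact sum_congr rfl fun g _ =>
    if_congr (by simp only [Bool.toNat_true, Bool.toNat_false]; omega) rfl rfl

theorem HpolyOp_succ_right (n : ℕ) (k : ℤ) :
    HpolyOp P μ (n + 1) k = HpolyOp P μ n (k - 1) * (μ * P) + HpolyOp P μ n k * μ := by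
  induction n generalizing k with
  | zero =>
    simp only [HpolyOp_succ_left, HpolyOp_zero]
    split_ifs <;> first | omega | noncomm_ring
  | succ n ih =>
    rw [HpolyOp_succ_left]
    conv_lhs => rw [ih, ih]
    conv_rhs => rw [HpolyOp_succ_left P μ n (k - 1), HpolyOp_succ_left P μ n k]
    noncomm_ring

theorem HpolyOp_add_two_left (n : ℕ) (k : ℤ) :
    HpolyOp P μ (n + 2) k = P * μ * P * μ * HpolyOp P μ n (k - 2)
      + (P * μ ^ 2 + μ * P * μ) * HpolyOp P μ n (k - 1) + μ ^ 2 * HpolyOp P μ n k := by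
  rw [HpolyOp_succ_left, HpolyOp_succ_left, HpolyOp_succ_left, sub_sub, one_add_one_eq_two]
  noncomm_ring

theorem HpolyOp_add_two_right (n : ℕ) (k : ℤ) :
    HpolyOp P μ (n + 2) k = HpolyOp P μ n (k - 2) * μ * P * μ * P
      + HpolyOp P μ n (k - 1) * (μ ^ 2 * P + μ * P * μ) + HpolyOp P μ n k * μ ^ 2 := by
  rw [HpolyOp_succ_right, HpolyOp_succ_right, HpolyOp_succ_right, sub_sub, one_add_one_eq_two]
  noncomm_ring

variable {P μ}

theorem mul_HpolyOp_add_two_mul_eq_left (hP : P * P = P) (h0 : P * μ * P = 0) (n : ℕ) (k : ℤ) :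
    P * HpolyOp P μ (n + 2) k * P
      = P * μ ^ 2 * (HpolyOp P μ n (k - 1) + HpolyOp P μ n k) * P := by
  rw [HpolyOp_add_two_left]
  generalize HpolyOp P μ n (k - 2) = A, HpolyOp P μ n (k - 1) = B, HpolyOp P μ n k = C
  calc _
      = P * (P * μ * P) * μ * A * P + (P * P) * μ ^ 2 * B * P + (P * μ * P) * μ * B * P
        + P * μ ^ 2 * C * P := by noncomm_ring
    _ = P * μ ^ 2 * (B + C) * P := by rw [h0, hP]; noncomm_ring

theorem mul_HpolyOp_add_two_mul_eq_right (hP : P * P = P) (h0 : P * μ * P = 0) (n : ℕ) (k : ℤ) :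
    P * HpolyOp P μ (n + 2) k * P
      = P * (HpolyOp P μ n (k - 1) + HpolyOp P μ n k) * μ ^ 2 * P := by
  rw [HpolyOp_add_two_right]
  generalize HpolyOp P μ n (k - 2) = A, HpolyOp P μ n (k - 1) = B, HpolyOp P μ n k = C
  calc _
      = P * A * μ * (P * μ * P) * P + P * B * μ ^ 2 * (P * P) + P * B * μ * (P * μ * P)
        + P * C * μ ^ 2 * P := by noncomm_ring
    _ = P * (B + C) * μ ^ 2 * P := by rw [h0, hP]; noncomm_ring

theorem commutator_HpolyOp_sandwich_add_sub_one (hP : P * P = P) (h0 : P * μ * P = 0)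
    (n : ℕ) (k : ℤ) :
    P * (μ ^ 2 * HpolyOp P μ n k - HpolyOp P μ n k * μ ^ 2) * P
      + P * (μ ^ 2 * HpolyOp P μ n (k - 1) - HpolyOp P μ n (k - 1) * μ ^ 2) * P = 0 :=
  calc _ = P * μ ^ 2 * (HpolyOp P μ n (k - 1) + HpolyOp P μ n k) * P
        - P * (HpolyOp P μ n (k - 1) + HpolyOp P μ n k) * μ ^ 2 * P := by noncomm_ring
    _ = 0 := by
      rw [← mul_HpolyOp_add_two_mul_eq_left hP h0, ← mul_HpolyOp_add_two_mul_eq_right hP h0,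
        sub_self]

end HpolyOp

/-- If `P₊μP₊ = 0`, then `P₊ [μ², H^n_k(μ)] P₊ = 0` for all `n`, `k`. -/
theorem Hpoly_commutator_block_vanishes {H : Type*} [NormedAddCommGroup H]
    [InnerProductSpace ℂ H]
    (P μ : H →L[ℂ] H) (hP_proj : P * P = P)
    (h0 : P * μ * P = 0) (n : ℕ) (k : ℤ) :
    P * (μ ^ 2 * HpolyOp P μ n k - HpolyOp P μ n k * μ ^ 2) * P = 0 := by
  have step := commutator_HpolyOp_sandwich_add_sub_one hP_proj h0 n
  induction k using Int.induction_on with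
  | zero => simpa [HpolyOp_of_neg] using step 0
  | succ i ih => simpa [ih] using step (i + 1)
  | pred i _ => simp [HpolyOp_of_neg P μ n (by omega : -(i : ℤ) - 1 < 0)]
end
end

section
/- Let B be a positive trace-class operator on H₊ and u : H₊ → H₋ a partial isometry with initial space equal to the closure of the range of B. Let D be a skew-adjoint trace-class operator on H₋. For the operator μ with blocks μ₊₊ = 0, μ₋₊ = uB, μ₊₋ = −Bu*, μ₋₋ = D, and any differentiable flow t ↦ μ(t) satisfying d(uB)/dt = i^{n+1}(μ^n)₋₋ uB with B and D constant, the partial isometry u satisfies du/dt = i^{n+1}(μ^n)₋₋ u. -/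
noncomputable section

/-!
Differentiating `u(t) B` gives `u' B = c M u B` (with `c = i^{n+1}`, `M = (μ^n)₋₋`), so `u'` and
`c M u` agree on `closure (im B)`. Its orthogonal complement is `ker u(s)` for every `s`, so on it
`u(s) x = 0` identically in `s`, whence `u' x = 0 = c M u x`. Hence `u' = c M u`.
-/

open ContinuousLinearMap

section OrthogonalDecomposition

variable {𝕜 E F : Type*} [RCLike 𝕜] [NormedAddCommGroup E] [InnerProductSpace 𝕜 E] [CompleteSpace E]
  [NormedAddCommGroup F] [NormedSpace 𝕜 F]

theorem ContinuousLinearMap.ext_of_comp_eq_of_eqOn_orthogonal {G : Type*} [TopologicalSpace G]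
    [AddCommGroup G] [Module 𝕜 G] {X Y : E →L[𝕜] F} {B : G →L[𝕜] E} (hB : X ∘L B = Y ∘L B)
    (h : ∀ x ∈ (LinearMap.range (B : G →ₗ[𝕜] E)).topologicalClosureᗮ, X x = Y x) : X = Y := by
  set K := (LinearMap.range (B : G →ₗ[𝕜] E)).topologicalClosure
  have : CompleteSpace K := (Submodule.isClosed_topologicalClosure _).completeSpace_coe
  have hK : K ≤ LinearMap.eqLocus (X : E →ₗ[𝕜] F) Y := by
    refine Submodule.topologicalClosure_minimal _ ?_ (isClosed_eqLocus X Y)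
    rintro _ ⟨y, rfl⟩
    exact DFunLike.congr_fun hB y
  ext x
  obtain ⟨y, hy, z, hz, rfl⟩ := K.exists_add_mem_mem_orthogonal x
  rw [map_add, map_add, show X y = Y y from hK hy, h z hz]

theorem LinearMap.ker_eq_orthogonal_of_orthogonal_ker_eq {A : E →L[𝕜] F} {K : Submodule 𝕜 E}
    (h : (LinearMap.ker (A : E →ₗ[𝕜] F))ᗮ = K) :
    LinearMap.ker (A : E →ₗ[𝕜] F) = Kᗮ := by
  have : CompleteSpace (LinearMap.ker (A : E →ₗ[𝕜] F)) := (isClosed_ker A).completeSpace_coe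
  rw [← h, Submodule.orthogonal_orthogonal]

end OrthogonalDecomposition

theorem HasDerivAt.clm_apply_eq_zero_of_forall {E F : Type*}
    [NormedAddCommGroup E] [NormedSpace ℂ E] [NormedAddCommGroup F] [NormedSpace ℂ F]
    {u : ℝ → E →L[ℂ] F} {u' : E →L[ℂ] F} {t : ℝ} (hu : HasDerivAt u u' t) {x : E}
    (hx : ∀ s, u s x = 0) : u' x = 0 := by
  have hux : HasDerivAt (fun s => u s x) (u' x) t :=
    ((apply ℂ F x).restrictScalars ℝ).hasFDerivAt.comp_hasDerivAt t hu
  simp only [hx] at hux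
  exact hux.unique (hasDerivAt_const t 0)

theorem partial_isometry_flow_general {H : Type*} [NormedAddCommGroup H] [InnerProductSpace ℂ H]
    [CompleteSpace H]
    (P B : H →L[ℂ] H)
    (n : ℕ) (u : ℝ → H →L[ℂ] H)
    (hu_init : ∀ t : ℝ, (LinearMap.ker (u t : H →ₗ[ℂ] H))ᗮ = (LinearMap.range (B : H →ₗ[ℂ] H)).topologicalClosure)
    (hu_diff : Differentiable ℝ u)
    (μ : ℝ → H →L[ℂ] H)
    (hflow : ∀ t : ℝ, HasDerivAt (fun s => u s * B)
      ((Complex.I ^ (n + 1)) • ((1 - P) * (μ t) ^ n * (1 - P) * (u t * B))) t) :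
    ∀ t : ℝ, HasDerivAt u
      ((Complex.I ^ (n + 1)) • ((1 - P) * (μ t) ^ n * (1 - P) * u t)) t := by
  intro t
  have hu := (hu_diff t).hasDerivAt
  suffices hderiv : deriv u t = Complex.I ^ (n + 1) • ((1 - P) * μ t ^ n * (1 - P) * u t) from
    hderiv ▸ hu
  apply ContinuousLinearMap.ext_of_comp_eq_of_eqOn_orthogonal (B := B)
  · rw [← mul_def, ← mul_def, smul_mul_assoc, mul_assoc]
    exact (hu.mul_const B).unique (hflow t)
  · intro x hx
    have hux (s : ℝ) : u s x = 0 := by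
      have hker := LinearMap.ker_eq_orthogonal_of_orthogonal_ker_eq (hu_init s)
      exact (hker ▸ hx : x ∈ LinearMap.ker (u s : H →ₗ[ℂ] H))
    rw [hu.clm_apply_eq_zero_of_forall hux, smul_apply, mul_def, comp_apply, hux t, map_zero,
      smul_zero]

/-- Let `B` be a positive trace-class operator supported on `H₊`, `D` a skew-adjoint
trace-class operator supported on `H₋`, and `u(t)` a differentiable curve of partial
isometries from `H₊` to `H₋` with initial space `closure(im B)`.  For the operator `μ`
with blocks `μ₊₊ = 0`, `μ₋₊ = uB`, `μ₊₋ = −Bu*`, `μ₋₋ = D`, if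
`d(uB)/dt = i^{n+1}(μ^n)₋₋ uB`, then `du/dt = i^{n+1}(μ^n)₋₋ u`. -/
theorem partial_isometry_flow {H : Type*} [NormedAddCommGroup H] [InnerProductSpace ℂ H]
    [CompleteSpace H]
    (P B D : H →L[ℂ] H) (hP_proj : P * P = P) (hP_sa : IsSelfAdjoint P)
    (hB_supp : P * B * P = B) (hB_pos : B.IsPositive) (hB_tc : IsTraceClass B)
    (hD_supp : (1 - P) * D * (1 - P) = D) (hD_skew : star D = -D) (hD_tc : IsTraceClass D)
    (n : ℕ) (u : ℝ → H →L[ℂ] H)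
    (hu_supp : ∀ t : ℝ, (1 - P) * u t * P = u t)
    (hu_pi : ∀ t : ℝ, u t * star (u t) * u t = u t)
    (hu_init : ∀ t : ℝ, (LinearMap.ker (u t : H →ₗ[ℂ] H))ᗮ = (LinearMap.range (B : H →ₗ[ℂ] H)).topologicalClosure)
    (hu_diff : Differentiable ℝ u)
    (μ : ℝ → H →L[ℂ] H)
    (hμ : ∀ t : ℝ, μ t = u t * B - B * star (u t) + D)
    (hflow : ∀ t : ℝ, HasDerivAt (fun s => u s * B)
      ((Complex.I ^ (n + 1)) • ((1 - P) * (μ t) ^ n * (1 - P) * (u t * B))) t) :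
    ∀ t : ℝ, HasDerivAt u
      ((Complex.I ^ (n + 1)) • ((1 - P) * (μ t) ^ n * (1 - P) * u t)) t :=
  partial_isometry_flow_general P B n u hu_init hu_diff μ hflow
end
end
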